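/- arXiv:1211.0558 — 3 statements merged into one kernel-verified Lean document; each statement's English description precedes it below -/
import Mathlib

section
/- Suppose A and B are vertex-disjoint complete balanced bipartite graphs with k(A) ≥ k(B) ≥ 1, and A⁺ and B⁻ are vertex-disjoint complete balanced bipartite graphs with k(A⁺) = k(A) + 1 and k(B⁻) = k(B) − 1. Then k(A⁺ ⊔ B⁻) = k(A ⊔ B) and e(A⁺ ⊔ B⁻) ≥ e(A ⊔ B). -/
noncomputable section

/-- A bipartite graph: two disjoint finite vertex sets `L`, `R`
and a set of edges `E ⊆ L × R`. -/
structure BipGraph (V : Type) [DecidableEq V] where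
  L : Finset V
  R : Finset V
  disj : Disjoint L R
  E : Finset (V × V)
  E_sub : E ⊆ L ×ˢ R

namespace BipGraph

variable {V : Type} [DecidableEq V]

/-- the vertex set -/
def verts (A : BipGraph V) : Finset V := A.L ∪ A.R

/-- `v A` is the number of vertices of `A` -/
def v (A : BipGraph V) : ℕ := A.verts.card

/-- `e A` is the number of edges of `A` -/
def e (A : BipGraph V) : ℕ := A.E.card

/-- the underlying simple graph on the vertex set of `A` -/
def graph (A : BipGraph V) : SimpleGraph {x : V // x ∈ A.verts} where
  Adj x y := (x.1, y.1) ∈ A.E ∨ (y.1, x.1) ∈ A.E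
  symm := by
    constructor
    intro x y h
    exact h.symm
  loopless := by
    constructor
    intro x h
    have hx : (x.1, x.1) ∈ A.E := by rcases h with h | h <;> exact h
    have hmem := A.E_sub hx
    rw [Finset.mem_product] at hmem
    exact Finset.disjoint_left.mp A.disj hmem.1 hmem.2

/-- `CC A` is the number of connected components of `A` (isolated vertices count). -/
def CC (A : BipGraph V) : ℕ := Nat.card A.graph.ConnectedComponent

/-- `k A = v A - CC A` -/
def k (A : BipGraph V) : ℕ := A.v - A.CC

/-- `A` is complete if every left-right pair is an edge. -/
def Complete (A : BipGraph V) : Prop := A.E = A.L ×ˢ A.R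

/-- `A` is balanced if its parts differ in size by at most one. -/
def Balanced (A : BipGraph V) : Prop := ((A.L.card : ℤ) - (A.R.card : ℤ)).natAbs ≤ 1

/-- `A` is null if it has no edges. -/
def Null (A : BipGraph V) : Prop := A.E = ∅

/-- the induced subgraph of `A` on a set `S` of vertices: the vertices of `A`
belonging to `S`, together with all edges of `A` between them. -/
def induce (A : BipGraph V) (S : Finset V) : BipGraph V where
  L := A.L ∩ S
  R := A.R ∩ S
  disj := A.disj.mono Finset.inter_subset_left Finset.inter_subset_left
  E := A.E.filter (fun p => p.1 ∈ S ∧ p.2 ∈ S)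
  E_sub := by
    intro p hp
    rw [Finset.mem_filter] at hp
    have hmem := A.E_sub hp.1
    rw [Finset.mem_product] at hmem ⊢
    exact ⟨Finset.mem_inter.mpr ⟨hmem.1, hp.2.1⟩, Finset.mem_inter.mpr ⟨hmem.2, hp.2.2⟩⟩

/-- the degree of a vertex: the number of edges incident to it -/
def deg (A : BipGraph V) (x : V) : ℕ :=
  (A.E.filter (fun p => p.1 = x ∨ p.2 = x)).card

/-- `A` is almost `ℓ`-complete: the two parts have sizes within `0.01 * ℓ` of `ℓ`,
and every vertex has degree at least `0.9 * ℓ`. -/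
def AlmostComplete (ℓ : ℕ) (A : BipGraph V) : Prop :=
  |(A.L.card : ℝ) - (ℓ : ℝ)| ≤ 0.01 * ℓ ∧ |(A.R.card : ℝ) - (ℓ : ℝ)| ≤ 0.01 * ℓ ∧
  ∀ x ∈ A.verts, (0.9 : ℝ) * ℓ ≤ (A.deg x : ℝ)

/-- the disjoint union of two vertex-disjoint bipartite graphs -/
def disjUnion (A B : BipGraph V) (h : Disjoint A.verts B.verts) : BipGraph V where
  L := A.L ∪ B.L
  R := A.R ∪ B.R
  disj := by
    have h1 : Disjoint A.L B.R := h.mono Finset.subset_union_left Finset.subset_union_right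
    have h2 : Disjoint B.L A.R := h.symm.mono Finset.subset_union_left Finset.subset_union_right
    rw [Finset.disjoint_union_left, Finset.disjoint_union_right, Finset.disjoint_union_right]
    exact ⟨⟨A.disj, h1⟩, ⟨h2, B.disj⟩⟩
  E := A.E ∪ B.E
  E_sub := by
    intro p hp
    rw [Finset.mem_union] at hp
    rw [Finset.mem_product]
    rcases hp with hp | hp
    · have := A.E_sub hp; rw [Finset.mem_product] at this
      exact ⟨Finset.mem_union_left _ this.1, Finset.mem_union_left _ this.2⟩
    · have := B.E_sub hp; rw [Finset.mem_product] at this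
      exact ⟨Finset.mem_union_right _ this.1, Finset.mem_union_right _ this.2⟩

end BipGraph

/-- `estar (2*b) = b^2` and `estar (2*b+1) = b*(b+1)`; i.e. `⌊c/2⌋ * ⌈c/2⌉`. -/
def estar (c : ℕ) : ℕ := (c / 2) * ((c + 1) / 2)

/-!
A complete bipartite graph with both parts nonempty is connected, so `k = v - 1` and
`e = |L| |R|`, which is `estar v` when the parts are balanced; if a part is empty then
`e = k = 0`. Hence `e = estar (k + 1)` for complete balanced graphs. Since `k` and `e` are
additive over disjoint unions, the claim reduces to the convexity of `estar`, whose increments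
`estar (c + 1) - estar c = ⌈c / 2⌉` are nondecreasing.
-/

open SimpleGraph

theorem SimpleGraph.Reachable.eq_of_forall_adj {α β : Type*} {G : SimpleGraph α} {f : α → β}
    (hf : ∀ x y, G.Adj x y → f x = f y) {u v : α} (h : G.Reachable u v) : f u = f v := by
  obtain ⟨p⟩ := h
  induction p with
  | nil => rfl
  | cons hadj _ ih => exact (hf _ _ hadj).trans ih

def SimpleGraph.sumConnectedComponentEquiv {α β : Type*} (G : SimpleGraph α)
    (H : SimpleGraph β) :
    (G ⊕g H).ConnectedComponent ≃ G.ConnectedComponent ⊕ H.ConnectedComponent where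
  toFun := Quot.lift (Sum.map G.connectedComponentMk H.connectedComponentMk) fun _ _ =>
    Reachable.eq_of_forall_adj <| by
      rintro (a | a) (b | b) hadj
      · exact congrArg Sum.inl (ConnectedComponent.connectedComponentMk_eq_of_adj hadj)
      · exact (not_adj_sum_inl_inr _ _ hadj).elim
      · exact (not_adj_sum_inl_inr _ _ hadj.symm).elim
      · exact congrArg Sum.inr (ConnectedComponent.connectedComponentMk_eq_of_adj hadj)
  invFun := Sum.elim (ConnectedComponent.map Embedding.sumInl.toHom)
    (ConnectedComponent.map Embedding.sumInr.toHom)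
  left_inv := by
    rintro ⟨a | b⟩ <;> rfl
  right_inv := by
    rintro (c | c) <;> induction c using ConnectedComponent.ind <;> rfl

theorem estar_succ (c : ℕ) : estar (c + 1) = estar c + (c + 1) / 2 := by
  unfold estar
  rw [show (c + 1 + 1) / 2 = c / 2 + 1 by omega]
  ring

theorem estar_add_succ_le {a b : ℕ} (h : b ≤ a) :
    estar a + estar (b + 1) ≤ estar (a + 1) + estar b := by
  rw [estar_succ, estar_succ]
  omega

theorem mul_eq_estar_add {a b : ℕ} (h : ((a : ℤ) - b).natAbs ≤ 1) :
    a * b = estar (a + b) := by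
  unfold estar
  obtain rfl | rfl | rfl : a = b ∨ a = b + 1 ∨ b = a + 1 := by omega
  · rw [show (a + a) / 2 = a by omega, show (a + a + 1) / 2 = a by omega]
  · rw [show (b + 1 + b) / 2 = b by omega, show (b + 1 + b + 1) / 2 = b + 1 by omega, mul_comm]
  · rw [show (a + (a + 1)) / 2 = a by omega, show (a + (a + 1) + 1) / 2 = a + 1 by omega]

namespace BipGraph

variable {V : Type} [DecidableEq V]

theorem mem_verts_of_mem_E {A : BipGraph V} {x y : V} (hxy : (x, y) ∈ A.E) :
    x ∈ A.verts ∧ y ∈ A.verts := by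
  obtain ⟨hx, hy⟩ := Finset.mem_product.mp (A.E_sub hxy)
  exact ⟨Finset.mem_union_left _ hx, Finset.mem_union_right _ hy⟩

theorem v_eq_card_add_card (A : BipGraph V) : A.v = A.L.card + A.R.card :=
  Finset.card_union_of_disjoint A.disj

theorem CC_le_v (A : BipGraph V) : A.CC ≤ A.v := by
  rw [CC, v, ← Nat.card_eq_finsetCard]
  exact Nat.card_le_card_of_surjective _ Quot.mk_surjective

theorem CC_eq_v_of_null {A : BipGraph V} (hA : A.Null) : A.CC = A.v := by
  have hbot : A.graph = ⊥ := by
    ext x y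
    simp [graph, show A.E = ∅ from hA]
  have hinj : Function.Injective A.graph.connectedComponentMk := fun x y hxy => by
    rwa [ConnectedComponent.eq, hbot, reachable_bot] at hxy
  rw [CC, v, ← Nat.card_eq_finsetCard]
  exact Nat.card_congr (Equiv.ofBijective _ ⟨hinj, Quot.mk_surjective⟩).symm

theorem k_eq_zero_of_null {A : BipGraph V} (hA : A.Null) : A.k = 0 := by
  rw [k, CC_eq_v_of_null hA, Nat.sub_self]

theorem CC_eq_one_of_complete {A : BipGraph V} (hc : A.Complete) (hL : A.L.Nonempty)
    (hR : A.R.Nonempty) : A.CC = 1 := by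
  obtain ⟨l, hl⟩ := hL
  obtain ⟨r, hr⟩ := hR
  have hedge : ∀ x ∈ A.L, ∀ y ∈ A.R, (x, y) ∈ A.E := fun x hx y hy => by
    rw [hc]
    exact Finset.mem_product.mpr ⟨hx, hy⟩
  let l' : A.verts := ⟨l, Finset.mem_union_left _ hl⟩
  let r' : A.verts := ⟨r, Finset.mem_union_right _ hr⟩
  have hlr : A.graph.Adj l' r' := Or.inl (hedge l hl r hr)
  have hreach : ∀ x : A.verts, A.graph.Reachable x r' := fun x => by
    rcases Finset.mem_union.mp x.2 with hx | hx
    · exact Adj.reachable (Or.inl (hedge x hx r hr))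
    · have hxl : A.graph.Adj x l' := Or.inr (hedge l hl x hx)
      exact hxl.reachable.trans hlr.reachable
  have : Subsingleton A.graph.ConnectedComponent :=
    Preconnected.subsingleton_connectedComponent fun x y => (hreach x).trans (hreach y).symm
  exact Nat.card_eq_one_iff_unique.mpr ⟨this, ⟨A.graph.connectedComponentMk r'⟩⟩

theorem k_add_one_of_complete {A : BipGraph V} (hc : A.Complete) (hL : A.L.Nonempty)
    (hR : A.R.Nonempty) : A.k + 1 = A.v := by
  have := hL.card_pos
  rw [k, CC_eq_one_of_complete hc hL hR, v_eq_card_add_card]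
  omega

theorem e_eq_estar_k_add_one {A : BipGraph V} (hc : A.Complete) (hb : A.Balanced) :
    A.e = estar (A.k + 1) := by
  by_cases hLR : A.L.Nonempty ∧ A.R.Nonempty
  · rw [e, hc, Finset.card_product, mul_eq_estar_add hb, ← v_eq_card_add_card,
      k_add_one_of_complete hc hLR.1 hLR.2]
  · have hnull : A.Null := by
      rw [Null, hc, Finset.product_eq_empty]
      simpa [Finset.nonempty_iff_ne_empty, or_iff_not_imp_left] using hLR
    rw [e, show A.E = ∅ from hnull, k_eq_zero_of_null hnull]
    rfl

section disjUnion

variable (A B : BipGraph V) (h : Disjoint A.verts B.verts)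

theorem verts_disjUnion : (A.disjUnion B h).verts = A.verts ∪ B.verts := by
  simp only [verts, disjUnion]
  ac_rfl

theorem v_disjUnion : (A.disjUnion B h).v = A.v + B.v := by
  rw [v, verts_disjUnion, Finset.card_union_of_disjoint h]
  rfl

theorem e_disjUnion : (A.disjUnion B h).e = A.e + B.e :=
  Finset.card_union_of_disjoint <| Finset.disjoint_left.mpr fun _ hpA hpB =>
    Finset.disjoint_left.mp h (mem_verts_of_mem_E hpA).1 (mem_verts_of_mem_E hpB).1

def graphDisjUnionIso : A.graph ⊕g B.graph ≃g (A.disjUnion B h).graph where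
  toEquiv := (Equiv.Finset.union _ _ h).trans (Equiv.subtypeEquivProp (by rw [verts_disjUnion]))
  map_rel_iff' := by
    have hAB : ∀ x ∈ A.verts, x ∉ B.verts := fun _ hx => Finset.disjoint_left.mp h hx
    rintro (⟨a, ha⟩ | ⟨a, ha⟩) (⟨b, hb⟩ | ⟨b, hb⟩) <;>
      change ((a, b) ∈ A.E ∪ B.E ∨ (b, a) ∈ A.E ∪ B.E) ↔ _ <;>
      simp only [sum_adj, graph, Finset.mem_union]
    all_goals grind [mem_verts_of_mem_E]

theorem CC_disjUnion : (A.disjUnion B h).CC = A.CC + B.CC := by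
  rw [CC, ← Nat.card_congr (graphDisjUnionIso A B h).connectedComponentEquiv,
    Nat.card_congr (sumConnectedComponentEquiv _ _), Nat.card_sum]
  rfl

theorem k_disjUnion : (A.disjUnion B h).k = A.k + B.k := by
  have := A.CC_le_v
  have := B.CC_le_v
  rw [k, k, k, v_disjUnion, CC_disjUnion]
  omega

end disjUnion

end BipGraph

theorem disjUnion_shift_general (V : Type) [DecidableEq V]
    (A B Ap Bm : BipGraph V)
    (hAB : Disjoint A.verts B.verts) (hApBm : Disjoint Ap.verts Bm.verts)
    (hAc : A.Complete) (hAb : A.Balanced)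
    (hBc : B.Complete) (hBb : B.Balanced)
    (hApc : Ap.Complete) (hApb : Ap.Balanced)
    (hBmc : Bm.Complete) (hBmb : Bm.Balanced)
    (hBA : B.k ≤ A.k)
    (hAp : Ap.k = A.k + 1) (hBm : Bm.k + 1 = B.k) :
    (Ap.disjUnion Bm hApBm).k = (A.disjUnion B hAB).k ∧
    (A.disjUnion B hAB).e ≤ (Ap.disjUnion Bm hApBm).e := by
  refine ⟨?_, ?_⟩
  · rw [BipGraph.k_disjUnion, BipGraph.k_disjUnion]
    omega
  · rw [BipGraph.e_disjUnion, BipGraph.e_disjUnion, BipGraph.e_eq_estar_k_add_one hAc hAb,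
      BipGraph.e_eq_estar_k_add_one hBc hBb, BipGraph.e_eq_estar_k_add_one hApc hApb,
      BipGraph.e_eq_estar_k_add_one hBmc hBmb, hAp, ← hBm]
    exact estar_add_succ_le (by omega)

/-- replacing a pair of complete balanced bipartite graphs with
`k`-values `(k(A), k(B))`, `k(A) ≥ k(B) ≥ 1`, by a pair with `k`-values
`(k(A)+1, k(B)-1)` preserves `k` of the disjoint union and does not decrease
the number of edges. -/
theorem disjUnion_shift (V : Type) [DecidableEq V]
    (A B Ap Bm : BipGraph V)
    (hAB : Disjoint A.verts B.verts) (hApBm : Disjoint Ap.verts Bm.verts)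
    (hAc : A.Complete) (hAb : A.Balanced)
    (hBc : B.Complete) (hBb : B.Balanced)
    (hApc : Ap.Complete) (hApb : Ap.Balanced)
    (hBmc : Bm.Complete) (hBmb : Bm.Balanced)
    (hB1 : 1 ≤ B.k) (hBA : B.k ≤ A.k)
    (hAp : Ap.k = A.k + 1) (hBm : Bm.k + 1 = B.k) :
    (Ap.disjUnion Bm hApBm).k = (A.disjUnion B hAB).k ∧
    (A.disjUnion B hAB).e ≤ (Ap.disjUnion Bm hApBm).e :=
  disjUnion_shift_general V A B Ap Bm hAB hApBm hAc hAb hBc hBb hApc hApb hBmc hBmb hBA hAp hBm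
end
end

section
/- For every natural number W and every integer ℓ ≥ (W+3)²: if A is a bipartite graph with k(A) ≤ 2ℓ + W and e(A) ≥ ℓ², then some connected component B of A satisfies e(B) ≥ ℓ² − e*(W+2) and v(B) ≤ 2ℓ + W + 1. -/
noncomputable section

/-!
Let `B` be a largest component of `A`, on `m + 1` vertices, and let `d` be the sum of `v - 1` over
the other components, so that `m + d ≤ k(A) ≤ 2ℓ + W`. A component on `n` vertices has at most
`e*(n)` edges, and `n ↦ e*(n + 1)` is superadditive, so the other components carry at most
`e*(d + 1)` edges. If `d ≤ W + 1`, then `B` is the required component. Otherwise `m ≤ 2ℓ - 2`, and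
* if `m ≤ 2ℓ - W - 4`, every component on `n ≤ m + 1` vertices has at most `(n - 1)(m + 3)/4`
  edges, so `e(A) ≤ (2ℓ + W)(m + 3)/4 < ℓ²`;
* if `m ≥ 2ℓ - W - 3`, then `d ≤ 2W + 3` and `e(A) ≤ ((m + 1)² + (d + 1)²)/4 < ℓ²`, since
  `m + 1 ≤ 2ℓ - 1` and `ℓ ≥ (W + 3)²`.
-/

open scoped Finset

theorem four_mul_estar_add_mod_two (n : ℕ) : 4 * estar n + n % 2 = n ^ 2 := by
  obtain ⟨b, rfl | rfl⟩ := Nat.even_or_odd' n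
  · rw [estar, show 2 * b / 2 = b by omega, show (2 * b + 1) / 2 = b by omega,
      show 2 * b % 2 = 0 by omega]
    ring
  · rw [estar, show (2 * b + 1) / 2 = b by omega, show (2 * b + 1 + 1) / 2 = b + 1 by omega,
      show (2 * b + 1) % 2 = 1 by omega]
    ring

theorem four_mul_estar_le_sq (n : ℕ) : 4 * estar n ≤ n ^ 2 := by
  have := four_mul_estar_add_mod_two n; omega

theorem estar_mono : Monotone estar := fun _ _ h =>
  Nat.mul_le_mul (Nat.div_le_div_right h) (Nat.div_le_div_right (by omega))

theorem mul_le_estar_add (a b : ℕ) : a * b ≤ estar (a + b) := by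
  have h4 : 4 * (a * b) ≤ (a + b) ^ 2 := by nlinarith [sq_nonneg ((a : ℤ) - b)]
  have := four_mul_estar_add_mod_two (a + b)
  omega

theorem estar_add_one_add_estar_add_one_le (a b : ℕ) :
    estar (a + 1) + estar (b + 1) ≤ estar (a + b + 1) := by
  rcases Nat.eq_zero_or_pos a with rfl | ha
  · simp [estar]
  rcases Nat.eq_zero_or_pos b with rfl | hb
  · simp [estar]
  have hab : 1 ≤ a * b := Nat.one_le_iff_ne_zero.mpr (by positivity)
  have := four_mul_estar_add_mod_two (a + 1)
  have := four_mul_estar_add_mod_two (b + 1)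
  have := four_mul_estar_add_mod_two (a + b + 1)
  have : (a + b + 1) ^ 2 + 1 = (a + 1) ^ 2 + (b + 1) ^ 2 + 2 * (a * b) := by ring
  omega

theorem sum_estar_add_one_le {ι : Type*} (s : Finset ι) (x : ι → ℕ) :
    ∑ c ∈ s, estar (x c + 1) ≤ estar (∑ c ∈ s, x c + 1) := by
  classical
  induction s using Finset.induction with
  | empty => simp [estar]
  | insert a s ha ih =>
    rw [Finset.sum_insert ha, Finset.sum_insert ha, add_assoc]
    exact (Nat.add_le_add_left ih _).trans (estar_add_one_add_estar_add_one_le _ _)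

theorem four_mul_estar_add_one_le {a m : ℕ} (h : a ≤ m) : 4 * estar (a + 1) ≤ a * (m + 3) := by
  rcases Nat.eq_zero_or_pos a with rfl | ha
  · simp [estar]
  nlinarith [four_mul_estar_le_sq (a + 1)]

theorem four_mul_sum_estar_add_one_le {ι : Type*} (s : Finset ι) (x : ι → ℕ) {m : ℕ}
    (hm : ∀ c ∈ s, x c ≤ m) : 4 * ∑ c ∈ s, estar (x c + 1) ≤ (∑ c ∈ s, x c) * (m + 3) := by
  rw [Finset.mul_sum, Finset.sum_mul]
  exact Finset.sum_le_sum fun c hc => four_mul_estar_add_one_le (hm c hc)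

theorem exists_sq_le_add_estar {ι : Type*} (s : Finset ι) (x e : ι → ℕ) {W ℓ : ℕ}
    (hℓ : (W + 3) ^ 2 ≤ ℓ) (he : ∀ c ∈ s, e c ≤ estar (x c + 1))
    (hx : ∑ c ∈ s, x c ≤ 2 * ℓ + W) (hsum : ℓ ^ 2 ≤ ∑ c ∈ s, e c) :
    ∃ c ∈ s, ℓ ^ 2 ≤ e c + estar (W + 2) ∧ x c ≤ 2 * ℓ + W := by
  classical
  have hℓ₁ : 1 ≤ ℓ := le_trans (by nlinarith) hℓ
  have hs : s.Nonempty := Finset.nonempty_of_sum_ne_zero (by nlinarith : ∑ c ∈ s, e c ≠ 0)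
  obtain ⟨B, hB, hBmax⟩ := s.exists_max_image x hs
  set d := ∑ c ∈ s.erase B, x c
  have hmd : x B + d ≤ 2 * ℓ + W := (Finset.add_sum_erase s x hB).trans_le hx
  have hsplit : ℓ ^ 2 ≤ e B + estar (d + 1) := calc
    ℓ ^ 2 ≤ e B + ∑ c ∈ s.erase B, e c := (Finset.add_sum_erase s e hB).symm ▸ hsum
    _ ≤ e B + ∑ c ∈ s.erase B, estar (x c + 1) := by
      gcongr with c hc; exact he c (Finset.mem_of_mem_erase hc)
    _ ≤ e B + estar (d + 1) := by gcongr; exact sum_estar_add_one_le _ _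
  clear_value d
  by_cases hd : d ≤ W + 1
  · exact ⟨B, hB, hsplit.trans (by gcongr; exact estar_mono (by omega)), by omega⟩
  exfalso
  by_cases hBsmall : x B + W + 4 ≤ 2 * ℓ
  · have h4 : 4 * ℓ ^ 2 ≤ (2 * ℓ + W) * (x B + 3) := calc
        4 * ℓ ^ 2 ≤ 4 * ∑ c ∈ s, estar (x c + 1) := by
          have := Finset.sum_le_sum he; omega
        _ ≤ (∑ c ∈ s, x c) * (x B + 3) := four_mul_sum_estar_add_one_le s x hBmax
        _ ≤ (2 * ℓ + W) * (x B + 3) := by gcongr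
    nlinarith
  · have h4 : 4 * ℓ ^ 2 ≤ (x B + 1) ^ 2 + (d + 1) ^ 2 := by
      have := he B hB
      have := four_mul_estar_le_sq (x B + 1)
      have := four_mul_estar_le_sq (d + 1)
      omega
    have hB' : (x B + 1) ^ 2 ≤ (2 * ℓ - 1) ^ 2 := Nat.pow_le_pow_left (by omega) 2
    have hd' : (d + 1) ^ 2 ≤ (2 * W + 4) ^ 2 := Nat.pow_le_pow_left (by omega) 2
    zify [hℓ₁] at hB' h4 hℓ
    nlinarith

namespace BipGraph

variable {V : Type} [DecidableEq V]

theorem mem_verts_of_mem_E_s5 {A : BipGraph V} {p : V × V} (hp : p ∈ A.E) :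
    p.1 ∈ A.verts ∧ p.2 ∈ A.verts := by
  have := Finset.mem_product.mp (A.E_sub hp)
  exact ⟨Finset.mem_union_left _ this.1, Finset.mem_union_right _ this.2⟩

theorem e_le_estar_v (A : BipGraph V) : A.e ≤ estar A.v := calc
  A.e ≤ #A.L * #A.R := by simpa [e, Finset.card_product] using Finset.card_le_card A.E_sub
  _ ≤ estar (#A.L + #A.R) := mul_le_estar_add _ _
  _ = estar A.v := by rw [v, verts, Finset.card_union_of_disjoint A.disj]

theorem verts_induce (A : BipGraph V) (S : Finset V) : (A.induce S).verts = A.verts ∩ S :=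
  (Finset.union_inter_distrib_right _ _ _).symm

def componentVerts (A : BipGraph V) (c : A.graph.ConnectedComponent) : Finset V :=
  c.supp.toFinite.toFinset.map (Function.Embedding.subtype _)

variable {A : BipGraph V}

theorem mem_componentVerts {c : A.graph.ConnectedComponent} {y : V} :
    y ∈ A.componentVerts c ↔ ∃ hy : y ∈ A.verts, A.graph.connectedComponentMk ⟨y, hy⟩ = c := by
  simp [componentVerts]

theorem mem_componentVerts_connectedComponentMk {z : {x // x ∈ A.verts}} {y : V} :
    y ∈ A.componentVerts (A.graph.connectedComponentMk z) ↔
      ∃ hy : y ∈ A.verts, A.graph.Reachable z ⟨y, hy⟩ := by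
  simp only [mem_componentVerts, SimpleGraph.ConnectedComponent.eq, SimpleGraph.reachable_comm]

theorem componentVerts_subset_verts (c : A.graph.ConnectedComponent) :
    A.componentVerts c ⊆ A.verts := fun _ hy =>
  (mem_componentVerts.mp hy).1

theorem eq_of_mem_componentVerts {c c' : A.graph.ConnectedComponent} {y : V}
    (h : y ∈ A.componentVerts c) (h' : y ∈ A.componentVerts c') : c = c' := by
  obtain ⟨_, rfl⟩ := mem_componentVerts.mp h
  obtain ⟨_, rfl⟩ := mem_componentVerts.mp h'
  rfl

theorem one_le_card_componentVerts (c : A.graph.ConnectedComponent) :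
    1 ≤ #(A.componentVerts c) := by
  obtain ⟨z, rfl⟩ := c.exists_rep
  exact Finset.card_pos.mpr ⟨z.1, mem_componentVerts.mpr ⟨z.2, rfl⟩⟩

theorem v_induce_componentVerts (c : A.graph.ConnectedComponent) :
    (A.induce (A.componentVerts c)).v = #(A.componentVerts c) := by
  rw [v, verts_induce, Finset.inter_eq_right.mpr (componentVerts_subset_verts c)]

theorem pairwise_disjoint_componentVerts : Pairwise (Function.onFun Disjoint A.componentVerts) :=
  fun _ _ hne => Finset.disjoint_left.mpr fun _ h h' => hne (eq_of_mem_componentVerts h h')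

variable (A) [Fintype A.graph.ConnectedComponent]

theorem sum_card_componentVerts : ∑ c, #(A.componentVerts c) = A.v := by
  rw [v, ← Finset.card_biUnion (pairwise_disjoint_componentVerts.set_pairwise _)]
  congr 1
  ext y
  simp only [Finset.mem_biUnion, Finset.mem_univ, true_and]
  exact ⟨fun ⟨c, hy⟩ => componentVerts_subset_verts c hy,
    fun hy => ⟨_, mem_componentVerts.mpr ⟨hy, rfl⟩⟩⟩

theorem sum_card_componentVerts_sub_one : ∑ c, (#(A.componentVerts c) - 1) = A.k := by
  rw [k, CC, Nat.card_eq_fintype_card, ← sum_card_componentVerts, Finset.card_univ.symm,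
    Finset.card_eq_sum_ones, ← Finset.sum_tsub_distrib]
  exact fun c _ => one_le_card_componentVerts c

theorem e_eq_sum_e_induce_componentVerts :
    A.e = ∑ c, (A.induce (A.componentVerts c)).e := by
  have hdisj : Pairwise (Function.onFun Disjoint fun c => (A.induce (A.componentVerts c)).E) :=
    fun _ _ hne => Finset.disjoint_left.mpr fun _ hp hp' =>
      hne (eq_of_mem_componentVerts (Finset.mem_filter.mp hp).2.1 (Finset.mem_filter.mp hp').2.1)
  simp only [e]
  rw [← Finset.card_biUnion (hdisj.set_pairwise _)]
  congr 1
  ext p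
  simp only [induce, Finset.mem_biUnion, Finset.mem_univ, true_and, Finset.mem_filter]
  refine ⟨fun hp => ?_, fun ⟨_, hp, _⟩ => hp⟩
  obtain ⟨h₁, h₂⟩ := mem_verts_of_mem_E_s5 hp
  have hadj : A.graph.Adj ⟨p.1, h₁⟩ ⟨p.2, h₂⟩ := Or.inl hp
  exact ⟨_, hp, mem_componentVerts.mpr ⟨h₁, rfl⟩,
    mem_componentVerts.mpr ⟨h₂, (SimpleGraph.ConnectedComponent.connectedComponentMk_eq_of_adj
      hadj).symm⟩⟩

end BipGraph

/-- if `ℓ ≥ (W+3)²`, `k(A) ≤ 2ℓ + W` and `e(A) ≥ ℓ²`, then some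
connected component `B` of `A` (the induced subgraph on the set of vertices
reachable from some vertex `x`) has `e(B) ≥ ℓ² − e*(W+2)` and `v(B) ≤ 2ℓ + W + 1`. -/
theorem big_component {V : Type} [DecidableEq V] (W ℓ : ℕ) (hℓ : (W + 3) ^ 2 ≤ ℓ)
    (A : BipGraph V) (hk : A.k ≤ 2 * ℓ + W) (he : ℓ ^ 2 ≤ A.e) :
    ∃ (S : Finset V) (x : V) (hx : x ∈ A.verts),
      (∀ y : V, y ∈ S ↔ ∃ hy : y ∈ A.verts, A.graph.Reachable ⟨x, hx⟩ ⟨y, hy⟩) ∧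
      ℓ ^ 2 ≤ (A.induce S).e + estar (W + 2) ∧
      (A.induce S).v ≤ 2 * ℓ + W + 1 := by
  have := Fintype.ofFinite A.graph.ConnectedComponent
  have he_le (c : A.graph.ConnectedComponent) :
      (A.induce (A.componentVerts c)).e ≤ estar (#(A.componentVerts c) - 1 + 1) := by
    rw [Nat.sub_add_cancel (BipGraph.one_le_card_componentVerts c),
      ← BipGraph.v_induce_componentVerts]
    exact BipGraph.e_le_estar_v _
  obtain ⟨c, -, hce, hcv⟩ := exists_sq_le_add_estar Finset.univ
    (fun c => #(A.componentVerts c) - 1) (fun c => (A.induce (A.componentVerts c)).e) hℓ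
    (fun c _ => he_le c) (BipGraph.sum_card_componentVerts_sub_one A ▸ hk)
    (BipGraph.e_eq_sum_e_induce_componentVerts A ▸ he)
  have hcv' : (A.induce (A.componentVerts c)).v ≤ 2 * ℓ + W + 1 := by
    have := BipGraph.one_le_card_componentVerts c
    rw [BipGraph.v_induce_componentVerts]
    omega
  obtain ⟨z, rfl⟩ := c.exists_rep
  exact ⟨_, z.1, z.2, fun y => BipGraph.mem_componentVerts_connectedComponentMk, hce, hcv'⟩

end
end

section
/- Fix an infinite cardinal λ and a bijection Φ : ω × ω → ω ∖ {0,1}. An ℵ₀-colored tree on λ is a structure M = (λ^{<ω}, ⊴, (P_j^M)_{j<ω}) with each P_j^M ⊆ λ^{<ω}. For m ∈ ω let ω^{≤m} be the tree of all sequences from ω of length ≤ m, and for V ⊆ ω ∖ {0,1} let S_V be the rooted tree consisting of pairwise disjoint copies of the trees ω^{≤m} for m ∈ V, identified at their roots. For an ℵ₀-colored tree M and η ∈ λ^{<ω}, let V_M(η) := {Φ(lg(η), j) : j < ω and η ∈ P_j^M}, and let f(M) := T₀*(S_{V_M(η)} : η ∈ T₀), where T₀ = λ^{<ω}. Then: (i)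 for every ℵ₀-colored tree M on λ, the partial order f(M) is isomorphic to a special subtree of λ^{<ω}; and (ii) for all ℵ₀-colored trees M, N on λ: M ≡∞ℵ₀ N if and only if f(M) ≡∞ℵ₀ f(N) (as structures with the order alone). -/
noncomputable section

/-- a finite partial map (given by its graph `p`) between structures each with a
single binary relation is a partial isomorphism if it is functional, injective,
and preserves and reflects the relation. -/
def IsPartialIso {M N : Type*} (r : M → M → Prop) (s : N → N → Prop)
    (p : Finset (M × N)) : Prop :=
  (∀ x y y', (x, y) ∈ p → (x, y') ∈ p → y = y') ∧
  (∀ x x' y, (x, y) ∈ p → (x', y) ∈ p → x = x') ∧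
  (∀ x y x' y', (x, y) ∈ p → (x', y') ∈ p → (r x x' ↔ s y y'))

/-- back-and-forth equivalence (`≡∞ℵ₀`) of two structures, each consisting of a
single binary relation: a nonempty family of finite partial isomorphisms with the
back-and-forth extension property. -/
def BackForth {M N : Type*} (r : M → M → Prop) (s : N → N → Prop) : Prop :=
  ∃ F : Set (Finset (M × N)), F.Nonempty ∧
    (∀ p ∈ F, IsPartialIso r s p) ∧
    ∀ p ∈ F, ∀ a : M, ∀ b : N,
      ∃ q ∈ F, p ⊆ q ∧ (∃ b', (a, b') ∈ q) ∧ (∃ a', (a', b) ∈ q)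

/-- a subtree of `λ^{<ω}`: a nonempty set of finite sequences closed under
initial segments -/
def IsSubtree {lam : Type*} (T : Set (List lam)) : Prop :=
  T.Nonempty ∧ ∀ l ∈ T, ∀ l', l' <+: l → l' ∈ T

/-- `η` is contained in a branch of `T`: some `ν ∈ λ^ω` extends `η` with all its
finite restrictions in `T`. -/
def InBranch {lam : Type*} (T : Set (List lam)) (η : List lam) : Prop :=
  ∃ ν : ℕ → lam, (∀ n : ℕ, (List.ofFn fun i : Fin n => ν i) ∈ T) ∧
    η = List.ofFn fun i : Fin η.length => ν i

/-- `T` is special: for every `η ∈ T` contained in a branch, every immediate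
successor of `η` in `T` has a proper extension in `T`. -/
def IsSpecial {lam : Type*} (T : Set (List lam)) : Prop :=
  ∀ η ∈ T, InBranch T η →
    ∀ ν ∈ T, η <+: ν → ν.length = η.length + 1 →
      ∃ ρ ∈ T, ν <+: ρ ∧ ν ≠ ρ

/-- back-and-forth equivalence of two colored trees on `λ^{<ω}` (with colors indexed
by `ι`): a nonempty family of finite partial maps, functional and injective, preserving
and reflecting the initial-segment relation and all the colors, with the back-and-forth
extension property. -/
def ColBackForth {lam ι : Type*} (P Q : ι → Set (List lam)) : Prop :=
  ∃ F : Set (Finset (List lam × List lam)), F.Nonempty ∧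
    (∀ p ∈ F,
      (∀ x y y', (x, y) ∈ p → (x, y') ∈ p → y = y') ∧
      (∀ x x' y, (x, y) ∈ p → (x', y) ∈ p → x = x') ∧
      (∀ x y x' y', (x, y) ∈ p → (x', y') ∈ p → (x <+: x' ↔ y <+: y')) ∧
      (∀ x y, (x, y) ∈ p → ∀ j : ι, x ∈ P j ↔ y ∈ Q j)) ∧
    ∀ p ∈ F, ∀ a b : List lam,
      ∃ q ∈ F, p ⊆ q ∧ (∃ b', (a, b') ∈ q) ∧ (∃ a', (a', b) ∈ q)

/-- `V_M(η) = {Φ(lg η, j) : j < ω, η ∈ P_j}` -/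
def colorSet {lam : Type*} (Φ : ℕ × ℕ → ℕ) (P : ℕ → Set (List lam)) (η : List lam) :
    Set ℕ :=
  {c | ∃ j : ℕ, η ∈ P j ∧ Φ (η.length, j) = c}

/-- the universe of the attached tree `f(M) = T₀*(S_{V(η)} : η ∈ T₀)`, `T₀ = λ^{<ω}`:
either a node `η` of `T₀`, or a non-root node of the copy of `S_{V(η)}` attached at
`η`, i.e. a triple `(η, m, s)` with `m ∈ V(η)` and `s` a nonempty sequence from `ω`
of length at most `m` (a non-root node of the copy of `ω^{≤m}` inside `S_{V(η)}`). -/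
def AttachCar (lam : Type*) (V : List lam → Set ℕ) : Type _ :=
  {x : List lam ⊕ (List lam × ℕ × List ℕ) //
    ∀ η mv s, x = Sum.inr (η, mv, s) → mv ∈ V η ∧ s ≠ [] ∧ s.length ≤ mv}

/-- the order of the attached tree: on `T₀` it is the initial segment relation;
a node of `T₀` is below a non-root node of `S_{V(ν)}` iff it is `⊴ ν`; within
an attached part, `(η,m,s) ≤ (η,m,t)` iff `s ⊴ t` (in the same copy of `ω^{≤m}`). -/
def AttachLe {lam : Type*} (x y : List lam ⊕ (List lam × ℕ × List ℕ)) : Prop :=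
  (∃ η ν, x = Sum.inl η ∧ y = Sum.inl ν ∧ η <+: ν) ∨
  (∃ η ν mv s, x = Sum.inl η ∧ y = Sum.inr (ν, mv, s) ∧ η <+: ν) ∨
  (∃ η mv s t, x = Sum.inr (η, mv, s) ∧ y = Sum.inr (η, mv, t) ∧ s <+: t)

/-!
Part (i). Using an injection `λ ⊕ ω ↪ λ`, code a node `η ∈ T₀` by `η` itself and a node `s` of
the copy of `ω^{≤m}` attached at `η` by `η` followed by the entries of `s`, each tagged with `m`.
The codes form a subtree on which the tree order becomes `⊴`. Branches run through `T₀` only,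
since above a node of a copy of `ω^{≤m}` there are no chains longer than `m`; and as `V(η)` avoids
`0` and `1`, every immediate successor of a node of `T₀` has a proper extension.

Part (ii). A back-and-forth system of the attached trees preserves the number of predecessors of
a node, hence maps `T₀` to `T₀` (only above `T₀` are there nodes of every height), and maps the
least node of a copy of `ω^{≤m}` at `η` to the least node of a copy of `ω^{≤m'}` at the image `ν`
of `η`, where `m = m'` because the heights reached above the two nodes agree. So `V(η) = V(ν)`,
which by injectivity of `Φ` means that `η` and `ν` have the same colors. Conversely, a colored
back-and-forth system preserves lengths, hence `V`, and lifts to the attached trees by moving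
each attached copy along with its root.
-/

section BackAndForth

variable {M N : Type*} {r : M → M → Prop} {s : N → N → Prop} {F : Set (Finset (M × N))}
  {p : Finset (M × N)} {a : M} {b : N}

def IsBackForthFamily (r : M → M → Prop) (s : N → N → Prop) (F : Set (Finset (M × N))) :
    Prop :=
  (∀ p ∈ F, IsPartialIso r s p) ∧
  ∀ p ∈ F, ∀ a b, ∃ q ∈ F, p ⊆ q ∧ (∃ b', (a, b') ∈ q) ∧ (∃ a', (a', b) ∈ q)

theorem backForth_iff : BackForth r s ↔ ∃ F, F.Nonempty ∧ IsBackForthFamily r s F := Iff.rfl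

def Matched (F : Set (Finset (M × N))) (a : M) (b : N) : Prop :=
  ∃ p ∈ F, (a, b) ∈ p

def swapFamily (F : Set (Finset (M × N))) : Set (Finset (N × M)) :=
  Finset.map (Equiv.prodComm M N).toEmbedding '' F

@[simp] theorem mem_map_prodComm {x : M} {y : N} :
    (y, x) ∈ p.map (Equiv.prodComm M N).toEmbedding ↔ (x, y) ∈ p := by
  simp [Finset.mem_map_equiv]

theorem Matched.swap (h : Matched F a b) : Matched (swapFamily F) b a := by
  obtain ⟨p, hp, hab⟩ := h
  exact ⟨_, ⟨p, hp, rfl⟩, mem_map_prodComm.2 hab⟩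

theorem IsPartialIso.swap (h : IsPartialIso r s p) :
    IsPartialIso s r (p.map (Equiv.prodComm M N).toEmbedding) := by
  obtain ⟨hfun, hinj, hrel⟩ := h
  refine ⟨fun y x x' hx hx' => ?_, fun y y' x hy hy' => ?_, fun y x y' x' hx hx' => ?_⟩
  · exact hinj x x' y (mem_map_prodComm.1 hx) (mem_map_prodComm.1 hx')
  · exact hfun x y y' (mem_map_prodComm.1 hy) (mem_map_prodComm.1 hy')
  · exact (hrel x y x' y' (mem_map_prodComm.1 hx) (mem_map_prodComm.1 hx')).symm

theorem IsPartialIso.eq_iff (h : IsPartialIso r s p) {a' : M} {b' : N} (hab : (a, b) ∈ p)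
    (hab' : (a', b') ∈ p) : a = a' ↔ b = b' :=
  ⟨fun e => h.1 a b b' hab (e ▸ hab'), fun e => h.2.1 a a' b hab (e ▸ hab')⟩

theorem IsBackForthFamily.swap (hF : IsBackForthFamily r s F) :
    IsBackForthFamily s r (swapFamily F) := by
  refine ⟨?_, ?_⟩
  · rintro _ ⟨p, hp, rfl⟩
    exact (hF.1 p hp).swap
  · rintro _ ⟨p, hp, rfl⟩ b a
    obtain ⟨q, hq, hpq, ⟨b', hb'⟩, ⟨a', ha'⟩⟩ := hF.2 p hp a b
    exact ⟨_, ⟨q, hq, rfl⟩, Finset.map_subset_map.2 hpq, ⟨a', mem_map_prodComm.2 ha'⟩,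
      ⟨b', mem_map_prodComm.2 hb'⟩⟩

theorem IsBackForthFamily.exists_superset_forall_mem [Nonempty N] (hF : IsBackForthFamily r s F)
    (hp : p ∈ F) (A : Finset M) : ∃ q ∈ F, p ⊆ q ∧ ∀ x ∈ A, ∃ y, (x, y) ∈ q := by
  classical
  induction A using Finset.induction_on with
  | empty => exact ⟨p, hp, subset_rfl, by simp⟩
  | insert x A _ ih =>
    obtain ⟨q, hq, hpq, hA⟩ := ih
    obtain ⟨q', hq', hqq', ⟨y, hy⟩, -⟩ := hF.2 q hq x (Classical.arbitrary N)
    refine ⟨q', hq', hpq.trans hqq', ?_⟩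
    simp only [Finset.mem_insert, forall_eq_or_imp]
    exact ⟨⟨y, hy⟩, fun x' hx' => (hA x' hx').imp fun _ h => hqq' h⟩

theorem IsBackForthFamily.ncard_le (hF : IsBackForthFamily r s F) (hab : Matched F a b)
    (hfin : {y | s y b}.Finite) : {x | r x a}.ncard ≤ {y | s y b}.ncard := by
  obtain ⟨p, hp, hab⟩ := hab
  by_cases hA : {x | r x a}.Finite
  swap
  · simp [Set.Infinite.ncard hA]
  have : Nonempty N := ⟨b⟩
  obtain ⟨q, hq, hpq, hcov⟩ := hF.exists_superset_forall_mem hp hA.toFinset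
  choose! g hg using hcov
  simp only [Set.Finite.mem_toFinset] at hg
  obtain ⟨-, hinj, hrel⟩ := hF.1 q hq
  calc {x | r x a}.ncard = (g '' {x | r x a}).ncard :=
        (Set.InjOn.ncard_image fun x hx x' hx' h =>
          hinj x x' _ (hg x hx) (by rw [h]; exact hg x' hx')).symm
    _ ≤ {y | s y b}.ncard := by
      refine Set.ncard_le_ncard ?_ hfin
      rintro _ ⟨x, hx, rfl⟩
      exact (hrel x (g x) a b (hg x hx) (hpq hab)).1 hx

theorem IsBackForthFamily.exists_matched (hF : IsBackForthFamily r s F) (hab : Matched F a b)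
    (x : M) :
    ∃ y, Matched F x y ∧ (r x a ↔ s y b) ∧ (r a x ↔ s b y) := by
  obtain ⟨p, hp, hab⟩ := hab
  obtain ⟨q, hq, hpq, ⟨y, hxy⟩, -⟩ := hF.2 p hp x b
  obtain ⟨-, -, hrel⟩ := hF.1 q hq
  exact ⟨y, ⟨q, hq, hxy⟩, hrel x y a b hxy (hpq hab), hrel a b x y (hpq hab) hxy⟩

end BackAndForth

section Prefixes

variable {α β : Type*}

theorem setOf_prefix_eq_image_take (l : List α) :
    {l' | l' <+: l} = (l.take ·) '' Set.Iic l.length := by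
  ext l'
  refine ⟨fun h => ⟨l'.length, h.length_le, (List.prefix_iff_eq_take.1 h).symm⟩, ?_⟩
  rintro ⟨k, -, rfl⟩
  exact List.take_prefix k l

theorem ncard_setOf_prefix (l : List α) : {l' | l' <+: l}.ncard = l.length + 1 := by
  rw [setOf_prefix_eq_image_take, Set.InjOn.ncard_image, Set.ncard_Iic_nat]
  intro k hk k' hk' h
  have := congrArg List.length h
  simp only [List.length_take] at this
  simp only [Set.mem_Iic] at hk hk'
  omega

theorem finite_setOf_prefix (l : List α) : {l' | l' <+: l}.Finite := by
  rw [setOf_prefix_eq_image_take]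
  exact (Set.finite_Iic _).image _

theorem length_eq_of_matched {F : Set (Finset (List α × List β))}
    (hF : IsBackForthFamily (fun x y => x <+: y) (fun x y => x <+: y) F)
    {η : List α} {ν : List β} (h : Matched F η ν) : η.length = ν.length := by
  have h₁ := hF.ncard_le h (finite_setOf_prefix ν)
  have h₂ := hF.swap.ncard_le h.swap (finite_setOf_prefix η)
  simp only [ncard_setOf_prefix] at h₁ h₂
  omega

theorem List.ofFn_prefix_ofFn (f : ℕ → α) {k n : ℕ} (h : k ≤ n) :
    (List.ofFn fun i : Fin k => f i) <+: List.ofFn fun i : Fin n => f i := by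
  obtain ⟨d, rfl⟩ := Nat.exists_eq_add_of_le h
  rw [List.ofFn_add]
  exact List.prefix_append _ _

theorem eq_and_eq_of_map_pair_eq {m m' : ℕ} {s t : List ℕ} (hs : s ≠ [])
    (h : s.map (Nat.pair m) = t.map (Nat.pair m')) : m = m' ∧ s = t := by
  obtain ⟨a, s, rfl⟩ := List.exists_cons_of_ne_nil hs
  cases t with
  | nil => simp at h
  | cons b t =>
    simp only [List.map_cons, List.cons.injEq, Nat.pair_eq_pair] at h
    obtain ⟨⟨rfl, rfl⟩, h⟩ := h
    exact ⟨rfl, by rw [List.map_injective_iff.2 (fun _ _ h => (Nat.pair_eq_pair.1 h).2) h]⟩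

end Prefixes

theorem exists_sum_nat_embedding (lam : Type*) [Infinite lam] : Nonempty (lam ⊕ ℕ ↪ lam) := by
  rw [← Cardinal.le_def, Cardinal.mk_sum, Cardinal.lift_uzero, Cardinal.mk_nat,
    Cardinal.lift_aleph0,
    Cardinal.add_eq_left (Cardinal.aleph0_le_mk lam) (Cardinal.aleph0_le_mk lam)]

section AttachLe

variable {lam : Type*} {η ν : List lam} {m m' : ℕ} {s t : List ℕ}

@[simp] theorem attachLe_inl_inl : AttachLe (.inl η) (.inl ν) ↔ η <+: ν := by
  simp [AttachLe]

@[simp] theorem attachLe_inl_inr : AttachLe (.inl η) (.inr (ν, m, t)) ↔ η <+: ν := by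
  simp [AttachLe]

@[simp] theorem not_attachLe_inr_inl : ¬ AttachLe (.inr (η, m, s)) (.inl ν) := by
  simp [AttachLe]

@[simp] theorem attachLe_inr_inr :
    AttachLe (.inr (η, m, s)) (.inr (ν, m', t)) ↔ η = ν ∧ m = m' ∧ s <+: t := by
  simp only [AttachLe, reduceCtorEq, false_and, exists_false, Sum.inr.injEq, Prod.mk.injEq,
    false_or]
  constructor
  · rintro ⟨_, _, _, _, ⟨rfl, rfl, rfl⟩, ⟨rfl, rfl, rfl⟩, h⟩
    exact ⟨rfl, rfl, h⟩
  · rintro ⟨rfl, rfl, h⟩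
    exact ⟨_, _, _, _, ⟨rfl, rfl, rfl⟩, ⟨rfl, rfl, rfl⟩, h⟩

end AttachLe

namespace AttachCar

variable {lam : Type*} {V W : List lam → Set ℕ}

def root (V : List lam → Set ℕ) (η : List lam) : AttachCar lam V :=
  ⟨.inl η, by rintro _ _ _ ⟨⟩⟩

def leaf (η : List lam) (m : ℕ) (s : List ℕ) (hm : m ∈ V η) (hs : s ≠ [])
    (hsm : s.length ≤ m) : AttachCar lam V :=
  ⟨.inr (η, m, s), by rintro _ _ _ ⟨⟩; exact ⟨hm, hs, hsm⟩⟩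

@[simp] theorem root_val (η : List lam) : (root V η).1 = .inl η := rfl

theorem root_injective : Function.Injective (root (lam := lam) V) :=
  fun _ _ h => Sum.inl_injective (congrArg Subtype.val h)

def rank (x : AttachCar lam V) : ℕ :=
  Sum.elim List.length (fun z => z.1.length + z.2.2.length) x.1

@[simp] theorem rank_root (η : List lam) : (root V η).rank = η.length := rfl

def trunc : AttachCar lam V → ℕ → AttachCar lam V
  | ⟨.inl η, _⟩, k => root V (η.take k)
  | ⟨.inr (η, m, s), h⟩, k =>
    if hk : k ≤ η.length then root V (η.take k)
    else leaf η m (s.take (k - η.length)) (h η m s rfl).1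
      (by simp only [ne_eq, List.take_eq_nil_iff, not_or]; exact ⟨by omega, (h η m s rfl).2.1⟩)
      ((List.length_take_le' _ _).trans (h η m s rfl).2.2)

theorem rank_trunc (x : AttachCar lam V) {k : ℕ} (hk : k ≤ x.rank) : (x.trunc k).rank = k := by
  obtain ⟨η | ⟨η, m, s⟩, hx⟩ := x
  · simp_all [trunc, rank, root]
  · simp only [rank, Sum.elim_inr] at hk
    simp only [trunc]
    split_ifs with h
    · simp [rank, root, h]
    · simp [rank, leaf]
      omega

theorem trunc_le (x : AttachCar lam V) (k : ℕ) : AttachLe (x.trunc k).1 x.1 := by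
  obtain ⟨η | ⟨η, m, s⟩, hx⟩ := x
  · simp [trunc, root, List.take_prefix]
  · simp only [trunc]
    split_ifs
    · simp [root, List.take_prefix]
    · simp [leaf, List.take_prefix]

theorem rank_le_of_le {x y : AttachCar lam V} (h : AttachLe y.1 x.1) : y.rank ≤ x.rank := by
  obtain ⟨η | ⟨η, m, s⟩, hx⟩ := x <;> obtain ⟨ν | ⟨ν, m', t⟩, hy⟩ := y <;>
    simp only [attachLe_inl_inl, attachLe_inl_inr, not_attachLe_inr_inl,
      attachLe_inr_inr] at h <;> simp only [rank, Sum.elim_inl, Sum.elim_inr]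
  · exact h.length_le
  · exact h.length_le.trans (Nat.le_add_right _ _)
  · obtain ⟨rfl, rfl, h⟩ := h
    exact Nat.add_le_add_left h.length_le _

theorem eq_trunc_of_le {x y : AttachCar lam V} (h : AttachLe y.1 x.1) : y = x.trunc y.rank := by
  obtain ⟨η | ⟨η, m, s⟩, hx⟩ := x <;> obtain ⟨ν | ⟨ν, m', t⟩, hy⟩ := y <;>
    simp only [attachLe_inl_inl, attachLe_inl_inr, not_attachLe_inr_inl,
      attachLe_inr_inr] at h <;> apply Subtype.ext
  · simp [trunc, root, rank, ← List.prefix_iff_eq_take.1 h]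
  · simp [trunc, root, rank, h.length_le, ← List.prefix_iff_eq_take.1 h]
  · obtain ⟨rfl, rfl, h⟩ := h
    have ht : t ≠ [] := (hy _ _ _ rfl).2.1
    have : ¬ ν.length + t.length ≤ ν.length := by
      simpa [List.length_pos_iff] using ht
    simp [trunc, leaf, rank, this, ← List.prefix_iff_eq_take.1 h]

theorem setOf_le_eq_image_trunc (x : AttachCar lam V) :
    {y : AttachCar lam V | AttachLe y.1 x.1} = x.trunc '' Set.Iic x.rank := by
  ext y
  refine ⟨fun h => ⟨y.rank, rank_le_of_le h, (eq_trunc_of_le h).symm⟩, ?_⟩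
  rintro ⟨k, -, rfl⟩
  exact trunc_le x k

theorem ncard_setOf_le (x : AttachCar lam V) :
    {y : AttachCar lam V | AttachLe y.1 x.1}.ncard = x.rank + 1 := by
  rw [setOf_le_eq_image_trunc, Set.InjOn.ncard_image, Set.ncard_Iic_nat]
  intro k hk k' hk' h
  rw [← rank_trunc x hk, ← rank_trunc x hk', h]

theorem finite_setOf_le (x : AttachCar lam V) :
    {y : AttachCar lam V | AttachLe y.1 x.1}.Finite := by
  rw [setOf_le_eq_image_trunc]
  exact (Set.finite_Iic _).image _

theorem rank_le_of_inr_le {x y : AttachCar lam V} {η : List lam} {m : ℕ} {s : List ℕ}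
    (hx : x.1 = .inr (η, m, s)) (h : AttachLe x.1 y.1) : y.rank ≤ η.length + m := by
  obtain ⟨ν | ⟨ν, m', t⟩, hy⟩ := y <;> rw [hx] at h <;> simp only [not_attachLe_inr_inl,
    attachLe_inr_inr] at h
  obtain ⟨rfl, rfl, -⟩ := h
  exact Nat.add_le_add_left (hy _ _ _ rfl).2.2 _

theorem exists_le_rank_eq {x : AttachCar lam V} {η : List lam} {m : ℕ} {s : List ℕ}
    (hx : x.1 = .inr (η, m, s)) :
    ∃ y : AttachCar lam V, AttachLe x.1 y.1 ∧ y.rank = η.length + m := by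
  obtain ⟨hm, hs, hsm⟩ := x.2 η m s hx
  refine ⟨leaf η m (s ++ List.replicate (m - s.length) 0) hm (by simp [hs]) (by simp; omega),
    ?_, ?_⟩
  · simp [hx, leaf]
  · simp [leaf, rank]
    omega

section Matched

variable {G : Set (Finset (AttachCar lam V × AttachCar lam W))}
  {a : AttachCar lam V} {b : AttachCar lam W}

theorem rank_eq_of_matched
    (hG : IsBackForthFamily (fun x y => AttachLe x.1 y.1) (fun x y => AttachLe x.1 y.1) G)
    (h : Matched G a b) : a.rank = b.rank := by
  have h₁ := hG.ncard_le h (finite_setOf_le b)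
  have h₂ := hG.swap.ncard_le h.swap (finite_setOf_le a)
  simp only [ncard_setOf_le] at h₁ h₂
  omega

theorem exists_root_of_matched [Nonempty lam]
    (hG : IsBackForthFamily (fun x y => AttachLe x.1 y.1) (fun x y => AttachLe x.1 y.1) G)
    (h : Matched G a b) {η : List lam} (ha : a.1 = .inl η) : ∃ ν, b.1 = .inl ν := by
  obtain ⟨ν | ⟨ν, m, t⟩, hb⟩ := b
  · exact ⟨ν, rfl⟩
  exfalso
  obtain ⟨y, hy, -, hby⟩ := hG.exists_matched h
    (root V (η ++ List.replicate (ν.length + m + 1) (Classical.arbitrary lam)))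
  have h₁ := rank_le_of_inr_le rfl (hby.1 (by simp [ha]))
  have h₂ := rank_eq_of_matched hG hy
  simp only [rank_root, List.length_append, List.length_replicate] at h₂
  omega

theorem length_add_le_of_matched_inr
    (hG : IsBackForthFamily (fun x y => AttachLe x.1 y.1) (fun x y => AttachLe x.1 y.1) G)
    (h : Matched G a b) {η ν : List lam} {m m' : ℕ} {s t : List ℕ}
    (ha : a.1 = .inr (η, m, s)) (hb : b.1 = .inr (ν, m', t)) :
    η.length + m ≤ ν.length + m' := by
  obtain ⟨x, hax, hx⟩ := exists_le_rank_eq ha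
  obtain ⟨y, hy, -, hby⟩ := hG.exists_matched h x
  rw [← hx, rank_eq_of_matched hG hy]
  exact rank_le_of_inr_le hb (hby.1 hax)

theorem subset_of_matched_root [Nonempty lam]
    (hG : IsBackForthFamily (fun x y => AttachLe x.1 y.1) (fun x y => AttachLe x.1 y.1) G)
    (hV : ∀ η, 0 ∉ V η) {η ν : List lam} (h : Matched G (root V η) (root W ν)) :
    V η ⊆ W ν := by
  intro m hm
  have hlen : η.length = ν.length := rank_eq_of_matched hG h
  have hm₀ : 1 ≤ m := Nat.one_le_iff_ne_zero.2 fun h => hV η (h ▸ hm)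
  let a : AttachCar lam V := leaf η m [0] hm (by simp) (by simpa using hm₀)
  obtain ⟨b, hab, -, hb⟩ := hG.exists_matched h a
  have hνb : AttachLe (root W ν).1 b.1 := hb.1 (by simp [a, leaf])
  obtain ⟨ν' | ⟨ν', m', t⟩, hbv⟩ := b
  · obtain ⟨_, h'⟩ := exists_root_of_matched hG.swap hab.swap rfl
    simp [a, leaf] at h'
  obtain ⟨hm', ht, -⟩ := hbv ν' m' t rfl
  simp only [root_val, attachLe_inl_inr] at hνb
  have hrank := rank_eq_of_matched hG hab
  simp only [a, leaf, rank, Sum.elim_inr, List.length_singleton] at hrank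
  have ht₀ : 0 < t.length := List.length_pos_iff.2 ht
  obtain rfl : ν = ν' := hνb.eq_of_length (by have := hνb.length_le; omega)
  have h₁ := length_add_le_of_matched_inr hG hab rfl rfl
  have h₂ := length_add_le_of_matched_inr hG.swap hab.swap rfl rfl
  obtain rfl : m = m' := by omega
  exact hm'

end Matched

def base (x : AttachCar lam V) : List lam := Sum.elim id Prod.fst x.1

def shape (x : AttachCar lam V) : Option (ℕ × List ℕ) :=
  Sum.elim (fun _ => none) (some ·.2) x.1

theorem ext_base_shape {x y : AttachCar lam V} (hb : x.base = y.base) (hs : x.shape = y.shape) :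
    x = y := by
  obtain ⟨η | ⟨η, m, s⟩, hx⟩ := x <;> obtain ⟨ν | ⟨ν, m', t⟩, hy⟩ := y <;>
    apply Subtype.ext <;> simp_all [base, shape]

def rebase : (x : AttachCar lam V) → (ν : List lam) → W ν = V x.base → AttachCar lam W
  | ⟨.inl _, _⟩, ν, _ => root W ν
  | ⟨.inr (η, m, s), hx⟩, ν, h =>
    leaf ν m s (by rw [h]; exact (hx η m s rfl).1) (hx η m s rfl).2.1 (hx η m s rfl).2.2

@[simp] theorem base_rebase (x : AttachCar lam V) (ν : List lam) (h : W ν = V x.base) :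
    (x.rebase ν h).base = ν := by
  obtain ⟨η | ⟨η, m, s⟩, hx⟩ := x <;> rfl

@[simp] theorem shape_rebase (x : AttachCar lam V) (ν : List lam) (h : W ν = V x.base) :
    (x.rebase ν h).shape = x.shape := by
  obtain ⟨η | ⟨η, m, s⟩, hx⟩ := x <;> rfl

theorem attachLe_congr {x x' : AttachCar lam V} {y y' : AttachCar lam W}
    (hs : x.shape = y.shape) (hs' : x'.shape = y'.shape)
    (hpre : x.base <+: x'.base ↔ y.base <+: y'.base)
    (heq : x.base = x'.base ↔ y.base = y'.base) :
    AttachLe x.1 x'.1 ↔ AttachLe y.1 y'.1 := by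
  obtain ⟨_ | ⟨_, _, _⟩, _⟩ := x <;> obtain ⟨_ | ⟨_, _, _⟩, _⟩ := x' <;>
    obtain ⟨_ | ⟨_, _, _⟩, _⟩ := y <;> obtain ⟨_ | ⟨_, _, _⟩, _⟩ := y' <;>
    simp_all [base, shape]

def code (x : AttachCar lam V) : List (lam ⊕ ℕ) :=
  Sum.elim (fun η => η.map .inl)
    (fun z => z.1.map .inl ++ z.2.2.map (.inr ∘ Nat.pair z.2.1)) x.1

@[simp] theorem length_code (x : AttachCar lam V) : x.code.length = x.rank := by
  obtain ⟨η | ⟨η, m, s⟩, hx⟩ := x <;> simp [code, rank]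

theorem code_trunc (x : AttachCar lam V) (k : ℕ) : (x.trunc k).code = x.code.take k := by
  obtain ⟨η | ⟨η, m, s⟩, hx⟩ := x
  · simp [code, trunc, root, List.map_take]
  · simp only [trunc]
    split_ifs with hk
    · simp [code, root, List.take_append, List.map_take, Nat.sub_eq_zero_of_le hk]
    · simp [code, leaf, List.take_append, List.map_take, List.take_of_length_le,
        (not_le.1 hk).le]

theorem code_injective : Function.Injective (code (V := V)) := by
  intro x y h
  have hl := congrArg (List.filterMap Sum.getLeft?) h
  have hr := congrArg (List.filterMap Sum.getRight?) h
  obtain ⟨η | ⟨η, m, s⟩, hx⟩ := x <;> obtain ⟨ν | ⟨ν, m', t⟩, hy⟩ := y <;>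
    apply Subtype.ext <;>
    simp only [code, Sum.elim_inl, Sum.elim_inr, List.filterMap_append, List.filterMap_map,
      Function.comp_def, Sum.getLeft?_inl, Sum.getLeft?_inr, Sum.getRight?_inl,
      Sum.getRight?_inr, List.filterMap_eq_map', List.filterMap_some, List.filterMap_none,
      List.append_nil, List.nil_append, Sum.inl.injEq, Sum.inr.injEq, reduceCtorEq,
      Prod.mk.injEq] at hl hr ⊢
  · exact hl
  · exact (hy _ _ _ rfl).2.1 (List.map_eq_nil_iff.1 hr.symm)
  · exact (hx _ _ _ rfl).2.1 (List.map_eq_nil_iff.1 hr)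
  · exact ⟨hl, eq_and_eq_of_map_pair_eq (hx _ _ _ rfl).2.1 hr⟩

theorem attachLe_iff_code_prefix (x y : AttachCar lam V) :
    AttachLe x.1 y.1 ↔ x.code <+: y.code := by
  rw [List.prefix_iff_eq_take, length_code, ← code_trunc, code_injective.eq_iff]
  exact ⟨eq_trunc_of_le, fun h => by rw [h]; exact trunc_le y _⟩

section Embedding

variable (ι : lam ⊕ ℕ ↪ lam)

theorem isSubtree_range_code_map :
    IsSubtree (Set.range fun x : AttachCar lam V => x.code.map ι) := by
  refine ⟨⟨_, root V [], rfl⟩, ?_⟩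
  rintro _ ⟨x, rfl⟩ l hl
  refine ⟨x.trunc l.length, ?_⟩
  change (x.trunc l.length).code.map ι = l
  rw [code_trunc, List.map_take]
  exact (List.prefix_iff_eq_take.1 hl).symm

theorem exists_inl_of_inBranch {x : AttachCar lam V}
    (h : InBranch (Set.range fun x : AttachCar lam V => x.code.map ι) (x.code.map ι)) :
    ∃ η, x.1 = .inl η := by
  rcases hxv : x.1 with η | ⟨η, m, s⟩
  · exact ⟨η, rfl⟩
  exfalso
  obtain ⟨f, hf, hxf⟩ := h
  obtain ⟨z, hz⟩ := hf (η.length + m + 1)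
  simp only at hz
  have hsm := (x.2 η m s hxv).2.2
  have hle : AttachLe x.1 z.1 := by
    rw [attachLe_iff_code_prefix, ← List.prefix_map_iff_of_injective ι.injective, hz, hxf]
    exact List.ofFn_prefix_ofFn f (by simp [rank, hxv]; omega)
  have hrank := congrArg List.length hz
  simp only [List.length_map, length_code, List.length_ofFn] at hrank
  have := rank_le_of_inr_le hxv hle
  omega

theorem exists_le_rank_succ [Nonempty lam] (hV : ∀ η, ∀ m ∈ V η, 2 ≤ m)
    {x y : AttachCar lam V} {η : List lam} (hx : x.1 = .inl η) (hxy : AttachLe x.1 y.1)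
    (hy : y.rank = x.rank + 1) :
    ∃ z : AttachCar lam V, AttachLe y.1 z.1 ∧ z.rank = y.rank + 1 := by
  obtain ⟨ν | ⟨ν, m, t⟩, hyv⟩ := y
  · exact ⟨root V (ν ++ [Classical.arbitrary lam]), by simp, by simp [rank]⟩
  obtain ⟨hm, ht, -⟩ := hyv ν m t rfl
  simp only [hx, attachLe_inl_inr] at hxy
  have ht₁ : t.length = 1 := by
    simp only [rank, hx, Sum.elim_inl, Sum.elim_inr] at hy
    have := hxy.length_le
    have := List.length_pos_iff.2 ht
    omega
  refine ⟨leaf ν m (t ++ [0]) hm (by simp) (by simp [ht₁, hV ν m hm]), by simp [leaf],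
    by simp [leaf, rank, Nat.add_assoc]⟩

theorem isSpecial_range_code_map [Nonempty lam] (hV : ∀ η, ∀ m ∈ V η, 2 ≤ m) :
    IsSpecial (Set.range fun x : AttachCar lam V => x.code.map ι) := by
  rintro _ ⟨x, rfl⟩ hbr _ ⟨y, rfl⟩ hxy hlen
  simp only [List.prefix_map_iff_of_injective ι.injective, ← attachLe_iff_code_prefix,
    List.length_map, length_code] at hxy hlen
  obtain ⟨η, hx⟩ := exists_inl_of_inBranch ι hbr
  obtain ⟨z, hyz, hz⟩ := exists_le_rank_succ hV hx hxy hlen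
  refine ⟨_, ⟨z, rfl⟩, ?_, fun h => ?_⟩
  · rwa [List.prefix_map_iff_of_injective ι.injective, ← attachLe_iff_code_prefix]
  · have := congrArg List.length h
    simp only [List.length_map, length_code] at this
    omega

end Embedding

theorem exists_special_subtree [Infinite lam] (hV : ∀ η, ∀ m ∈ V η, 2 ≤ m) :
    ∃ T : Set (List lam), IsSubtree T ∧ IsSpecial T ∧
      ∃ e : AttachCar lam V ≃ {l : List lam // l ∈ T},
        ∀ x y : AttachCar lam V, AttachLe x.1 y.1 ↔ (e x).1 <+: (e y).1 := by
  obtain ⟨ι⟩ := exists_sum_nat_embedding lam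
  have hinj : Function.Injective fun x : AttachCar lam V => x.code.map ι :=
    (List.map_injective_iff.2 ι.injective).comp code_injective
  refine ⟨_, isSubtree_range_code_map ι, isSpecial_range_code_map ι hV,
    Equiv.ofInjective _ hinj, fun x y => ?_⟩
  rw [Equiv.ofInjective_apply, Equiv.ofInjective_apply,
    List.prefix_map_iff_of_injective ι.injective, attachLe_iff_code_prefix]

end AttachCar

section ColorSet

variable {lam : Type*} {Φ : ℕ × ℕ → ℕ} {P Q : ℕ → Set (List lam)} {η ν : List lam}

theorem colorSet_eq_of_forall_mem_iff (hlen : η.length = ν.length)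
    (h : ∀ j, η ∈ P j ↔ ν ∈ Q j) : colorSet Φ P η = colorSet Φ Q ν := by
  ext c
  simp [colorSet, h, hlen]

theorem mem_of_colorSet_subset (hΦ : Function.Injective Φ)
    (h : colorSet Φ P η ⊆ colorSet Φ Q ν) (hlen : η.length = ν.length) {j : ℕ}
    (hj : η ∈ P j) : ν ∈ Q j := by
  obtain ⟨j', hj', he⟩ := h ⟨j, hj, rfl⟩
  rw [hlen] at he
  obtain rfl : j' = j := congrArg Prod.snd (hΦ he)
  exact hj'

end ColorSet

open AttachCar in
theorem colBackForth_of_backForth {lam : Type*} [Nonempty lam] {Φ : ℕ × ℕ → ℕ}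
    (hΦ : Function.Injective Φ) (hΦ0 : ∀ p, Φ p ≠ 0) {P Q : ℕ → Set (List lam)}
    (h : BackForth (fun x y : AttachCar lam (colorSet Φ P) => AttachLe x.1 y.1)
      (fun x y : AttachCar lam (colorSet Φ Q) => AttachLe x.1 y.1)) :
    ColBackForth P Q := by
  classical
  obtain ⟨G, ⟨q₀, hq₀⟩, hG⟩ := backForth_iff.1 h
  have hV (R : ℕ → Set (List lam)) (η : List lam) : 0 ∉ colorSet Φ R η :=
    fun ⟨_, _, h⟩ => hΦ0 _ h
  refine ⟨{p | ∃ q ∈ G, ∀ η ν, (η, ν) ∈ p → (root _ η, root _ ν) ∈ q},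
    ⟨∅, q₀, hq₀, by simp⟩, ?_, ?_⟩
  · rintro p ⟨q, hq, hpq⟩
    obtain ⟨hfun, hinj, hrel⟩ := hG.1 q hq
    refine ⟨fun η ν ν' h h' => root_injective (hfun _ _ _ (hpq _ _ h) (hpq _ _ h')),
      fun η η' ν h h' => root_injective (hinj _ _ _ (hpq _ _ h) (hpq _ _ h')),
      fun η ν η' ν' h h' => by simpa using hrel _ _ _ _ (hpq _ _ h) (hpq _ _ h'),
      fun η ν h j => ?_⟩
    have hm : Matched G (root _ η) (root _ ν) := ⟨q, hq, hpq _ _ h⟩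
    have hlen : η.length = ν.length := rank_eq_of_matched hG hm
    exact ⟨mem_of_colorSet_subset hΦ (subset_of_matched_root hG (hV P) hm) hlen,
      mem_of_colorSet_subset hΦ (subset_of_matched_root hG.swap (hV Q) hm.swap) hlen.symm⟩
  · rintro p ⟨q, hq, hpq⟩ a b
    obtain ⟨q', hq', hqq', ⟨y, hy⟩, ⟨x, hx⟩⟩ := hG.2 q hq (root _ a) (root _ b)
    obtain ⟨ν, hν⟩ := exists_root_of_matched hG ⟨q', hq', hy⟩ rfl
    obtain ⟨η, hη⟩ := exists_root_of_matched hG.swap (Matched.swap ⟨q', hq', hx⟩) rfl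
    obtain rfl : y = root _ ν := Subtype.ext hν
    obtain rfl : x = root _ η := Subtype.ext hη
    refine ⟨insert (a, ν) (insert (η, b) p), ⟨q', hq', ?_⟩,
      (Finset.subset_insert _ _).trans (Finset.subset_insert _ _), ⟨ν, by simp⟩, ⟨η, by simp⟩⟩
    simp only [Finset.mem_insert, Prod.mk.injEq]
    rintro η' ν' (⟨rfl, rfl⟩ | ⟨rfl, rfl⟩ | h)
    · exact hy
    · exact hx
    · exact hqq' (hpq _ _ h)

open AttachCar in
theorem backForth_of_colBackForth {lam : Type*} {Φ : ℕ × ℕ → ℕ} {P Q : ℕ → Set (List lam)}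
    (h : ColBackForth P Q) :
    BackForth (fun x y : AttachCar lam (colorSet Φ P) => AttachLe x.1 y.1)
      (fun x y : AttachCar lam (colorSet Φ Q) => AttachLe x.1 y.1) := by
  classical
  obtain ⟨F, ⟨p₀, hp₀⟩, hiso, hext⟩ := h
  have hF : IsBackForthFamily (fun x y : List lam => x <+: y) (fun x y => x <+: y) F :=
    ⟨fun p hp => ⟨(hiso p hp).1, (hiso p hp).2.1, (hiso p hp).2.2.1⟩, hext⟩
  have hcolor : ∀ p ∈ F, ∀ η ν, (η, ν) ∈ p → colorSet Φ P η = colorSet Φ Q ν :=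
    fun p hp η ν h => colorSet_eq_of_forall_mem_iff (length_eq_of_matched hF ⟨p, hp, h⟩)
      ((hiso p hp).2.2.2 η ν h)
  refine ⟨{q | ∃ p ∈ F, ∀ x y, (x, y) ∈ q → (x.base, y.base) ∈ p ∧ x.shape = y.shape},
    ⟨∅, p₀, hp₀, by simp⟩, ?_, ?_⟩
  · rintro q ⟨p, hp, hqp⟩
    have hp' := hF.1 p hp
    refine ⟨fun x y y' h h' => ?_, fun x x' y h h' => ?_, fun x y x' y' h h' => ?_⟩
    · exact ext_base_shape (hp'.1 _ _ _ (hqp _ _ h).1 (hqp _ _ h').1)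
        ((hqp _ _ h).2.symm.trans (hqp _ _ h').2)
    · exact ext_base_shape (hp'.2.1 _ _ _ (hqp _ _ h).1 (hqp _ _ h').1)
        ((hqp _ _ h).2.trans (hqp _ _ h').2.symm)
    · exact attachLe_congr (hqp _ _ h).2 (hqp _ _ h').2
        (hp'.2.2 _ _ _ _ (hqp _ _ h).1 (hqp _ _ h').1)
        (hp'.eq_iff (hqp _ _ h).1 (hqp _ _ h').1)
  · rintro q ⟨p, hp, hqp⟩ a b
    obtain ⟨p', hp', hpp', ⟨ν, hν⟩, ⟨η, hη⟩⟩ := hext p hp a.base b.base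
    let a' := a.rebase ν (hcolor p' hp' _ _ hν).symm
    let b' := b.rebase η (hcolor p' hp' _ _ hη)
    refine ⟨insert (a, a') (insert (b', b) q), ⟨p', hp', ?_⟩,
      (Finset.subset_insert _ _).trans (Finset.subset_insert _ _), ⟨a', by simp⟩, ⟨b', by simp⟩⟩
    simp only [Finset.mem_insert, Prod.mk.injEq]
    rintro x y (⟨rfl, rfl⟩ | ⟨rfl, rfl⟩ | h)
    · exact ⟨by simpa [a'] using hν, by simp [a']⟩
    · exact ⟨by simpa [b'] using hη, by simp [b']⟩
    · exact ⟨hpp' (hqp _ _ h).1, (hqp _ _ h).2⟩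

theorem colored_to_special_tree_general (lam : Type) [Infinite lam] (Φ : ℕ × ℕ → ℕ)
    (hΦinj : Function.Injective Φ) (hΦ0 : ∀ p, Φ p ≠ 0 ∧ Φ p ≠ 1) :
    (∀ P : ℕ → Set (List lam),
      ∃ T : Set (List lam), IsSubtree T ∧ IsSpecial T ∧
        ∃ e : AttachCar lam (colorSet Φ P) ≃ {l : List lam // l ∈ T},
          ∀ x y : AttachCar lam (colorSet Φ P), AttachLe x.1 y.1 ↔ (e x).1 <+: (e y).1) ∧
    (∀ P Q : ℕ → Set (List lam),
      ColBackForth P Q ↔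
        BackForth (fun x y : AttachCar lam (colorSet Φ P) => AttachLe x.1 y.1)
          (fun x y : AttachCar lam (colorSet Φ Q) => AttachLe x.1 y.1)) := by
  refine ⟨fun P => AttachCar.exists_special_subtree ?_, fun P Q =>
    ⟨backForth_of_colBackForth, colBackForth_of_backForth hΦinj fun p => (hΦ0 p).1⟩⟩
  rintro η _ ⟨j, -, rfl⟩
  have := hΦ0 (η.length, j)
  omega

/-- given a bijection `Φ : ω × ω → ω ∖ {0,1}`, the map sending an
`ℵ₀`-colored tree `M = (λ^{<ω}, ⊴, (P_j)_{j<ω})` to the attached tree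
`f(M) = T₀*(S_{V_M(η)} : η ∈ T₀)` satisfies: (i) `f(M)` is isomorphic (as a partial
order) to a special subtree of `λ^{<ω}`; and (ii) `M ≡∞ℵ₀ N` iff `f(M) ≡∞ℵ₀ f(N)`
(as orders alone). -/
theorem colored_to_special_tree (lam : Type) [Infinite lam] (Φ : ℕ × ℕ → ℕ)
    (hΦinj : Function.Injective Φ) (hΦ0 : ∀ p, Φ p ≠ 0 ∧ Φ p ≠ 1)
    (hΦsurj : ∀ c : ℕ, c ≠ 0 → c ≠ 1 → ∃ p, Φ p = c) :
    (∀ P : ℕ → Set (List lam),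
      ∃ T : Set (List lam), IsSubtree T ∧ IsSpecial T ∧
        ∃ e : AttachCar lam (colorSet Φ P) ≃ {l : List lam // l ∈ T},
          ∀ x y : AttachCar lam (colorSet Φ P), AttachLe x.1 y.1 ↔ (e x).1 <+: (e y).1) ∧
    (∀ P Q : ℕ → Set (List lam),
      ColBackForth P Q ↔
        BackForth (fun x y : AttachCar lam (colorSet Φ P) => AttachLe x.1 y.1)
          (fun x y : AttachCar lam (colorSet Φ Q) => AttachLe x.1 y.1)) :=
  colored_to_special_tree_general lam Φ hΦinj hΦ0
end
end
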